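/- arXiv:0906.4316 — 2 statements merged into one kernel-verified Lean document; each statement's English description precedes it below -/
import Mathlib

section
/- Let ⪰ be a complete binary relation on a mixture-closed set C of Anscombe–Aumann acts, and suppose u : S × O → ℝ and u' : S × O → ℝ each singly represent ⪰, i.e., for all a, b ∈ C, a ⪰ b iff ∑_{s,o} u(s,o)·a(s)(o) ≥ ∑_{s,o} u(s,o)·b(s)(o), and likewise for u'. Then there exist real numbers α ≥ 0 and β such that for all a ∈ C, ∑_{s,o} u'(s,o)·a(s)(o) = α·∑_{s,o} u(s,o)·a(s)(o) + β; that is, the expected-utility functional is unique up to affine transformations. -/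
/-- An Anscombe–Aumann act: a map assigning to each state a probability vector over outcomes. -/
def IsAAAct {S O : Type*} [Fintype O] (a : S → O → ℝ) : Prop :=
  ∀ s, (∀ o, 0 ≤ a s o) ∧ (∑ o, a s o = 1)

/-!
Two affine functionals `f`, `g` that induce the same weak order on a convex set `C` take equal
`g`-values wherever they take equal `f`-values. On a segment `[x, z]` in `C`, the point whose
`f`-value equals `f y` is found by linear interpolation, so `g y` is the same interpolation of
`g x` and `g z`. Fixing `c, b` with `f c < f b`, this makes `g` an affine function of `f` on `C`,
with slope `(g b - g c) / (f b - f c) ≥ 0`; if `f` is constant on `C`, so is `g`.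
-/

open AffineMap Set

theorem eq_of_le_iff_le {α β γ : Type*} [Preorder β] [PartialOrder γ] {C : Set α}
    {f : α → β} {g : α → γ} (hfg : ∀ x ∈ C, ∀ y ∈ C, f x ≤ f y ↔ g x ≤ g y)
    {x y : α} (hx : x ∈ C) (hy : y ∈ C) (h : f x = f y) : g x = g y :=
  le_antisymm ((hfg x hx y hy).1 h.le) ((hfg y hy x hx).1 h.ge)

section OrdinallyEquivalent

variable {𝕜 E : Type*} [Field 𝕜] [LinearOrder 𝕜] [IsStrictOrderedRing 𝕜]
  [AddCommGroup E] [Module 𝕜 E] {C : Set E} {f g : E →ᵃ[𝕜] 𝕜}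

theorem mul_sub_eq_of_le_iff_le (hC : Convex 𝕜 C)
    (hfg : ∀ x ∈ C, ∀ y ∈ C, f x ≤ f y ↔ g x ≤ g y) {x y z : E}
    (hx : x ∈ C) (hy : y ∈ C) (hz : z ∈ C) (hxy : f x ≤ f y) (hyz : f y ≤ f z)
    (hxz : f x < f z) :
    g y * (f z - f x) = g x * (f z - f y) + g z * (f y - f x) := by
  have hpos : 0 < f z - f x := sub_pos.2 hxz
  set t := (f y - f x) / (f z - f x)
  have ht : t ∈ Icc 0 1 :=
    ⟨div_nonneg (sub_nonneg.2 hxy) hpos.le, (div_le_one hpos).2 (by linarith)⟩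
  have htf : t * (f z - f x) = f y - f x := div_mul_cancel₀ _ hpos.ne'
  have hft : f (lineMap x z t) = f y := by
    rw [apply_lineMap, lineMap_apply_ring', htf, sub_add_cancel]
  have hgt := eq_of_le_iff_le hfg (hC.lineMap_mem hx hz ht) hy hft
  rw [apply_lineMap, lineMap_apply_ring'] at hgt
  linear_combination (f x - f z) * hgt + (g z - g x) * htf

theorem exists_nonneg_mul_add_of_le_iff_le (hC : Convex 𝕜 C)
    (hfg : ∀ x ∈ C, ∀ y ∈ C, f x ≤ f y ↔ g x ≤ g y) :
    ∃ α β : 𝕜, 0 ≤ α ∧ ∀ x ∈ C, g x = α * f x + β := by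
  by_cases hconst : ∀ x ∈ C, ∀ y ∈ C, f x ≤ f y
  · rcases C.eq_empty_or_nonempty with rfl | ⟨x₀, hx₀⟩
    · exact ⟨0, 0, le_rfl, by simp⟩
    refine ⟨0, g x₀, le_rfl, fun x hx => ?_⟩
    rw [zero_mul, zero_add]
    exact eq_of_le_iff_le hfg hx hx₀ (le_antisymm (hconst x hx x₀ hx₀) (hconst x₀ hx₀ x hx))
  push Not at hconst
  obtain ⟨b, hb, c, hc, hcb⟩ := hconst
  have hpos : 0 < f b - f c := sub_pos.2 hcb
  refine ⟨(g b - g c) / (f b - f c), (g c * f b - g b * f c) / (f b - f c),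
    div_nonneg (sub_nonneg.2 ((hfg c hc b hb).1 hcb.le)) hpos.le, fun a ha => ?_⟩
  rw [div_mul_eq_mul_div, ← add_div, eq_div_iff hpos.ne']
  rcases le_total (f a) (f c) with hac | hca
  · linear_combination -mul_sub_eq_of_le_iff_le hC hfg ha hc hb hac hcb.le (hac.trans_lt hcb)
  rcases le_total (f a) (f b) with hab | hba
  · linear_combination mul_sub_eq_of_le_iff_le hC hfg hc ha hb hca hab hcb
  · linear_combination -mul_sub_eq_of_le_iff_le hC hfg hc hb ha hcb.le hba (hcb.trans_le hba)

end OrdinallyEquivalent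

def expectedUtility {S O : Type*} [Fintype S] [Fintype O] (u : S → O → ℝ) :
    (S → O → ℝ) →ᵃ[ℝ] ℝ :=
  LinearMap.toAffineMap
    { toFun a := ∑ s, ∑ o, u s o * a s o
      map_add' a b := by simp only [Pi.add_apply, mul_add, Finset.sum_add_distrib]
      map_smul' r a := by
        simp only [Pi.smul_apply, smul_eq_mul, RingHom.id_apply, Finset.mul_sum,
          mul_left_comm (u _ _) r] }

theorem singleUtilityRep_unique_up_to_affine_general
    {S O : Type*} [Fintype S] [Fintype O]
    (C : Set (S → O → ℝ)) (R : (S → O → ℝ) → (S → O → ℝ) → Prop)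
    (hmix : ∀ a ∈ C, ∀ b ∈ C, ∀ r : ℝ, 0 ≤ r → r ≤ 1 → r • a + (1 - r) • b ∈ C)
    (u u' : S → O → ℝ)
    (hu : ∀ a ∈ C, ∀ b ∈ C,
      (R a b ↔ ∑ s, ∑ o, u s o * a s o ≥ ∑ s, ∑ o, u s o * b s o))
    (hu' : ∀ a ∈ C, ∀ b ∈ C,
      (R a b ↔ ∑ s, ∑ o, u' s o * a s o ≥ ∑ s, ∑ o, u' s o * b s o)) :
    ∃ α β : ℝ, 0 ≤ α ∧ ∀ a ∈ C,
      ∑ s, ∑ o, u' s o * a s o = α * (∑ s, ∑ o, u s o * a s o) + β := by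
  have hC : Convex ℝ C := fun a ha b hb r r' hr _ hrr' => by
    obtain rfl : r' = 1 - r := eq_sub_of_add_eq' hrr'
    exact hmix a ha b hb r hr (by linarith)
  exact exists_nonneg_mul_add_of_le_iff_le (f := expectedUtility u) (g := expectedUtility u') hC
    fun a ha b hb => (hu b hb a ha).symm.trans (hu' b hb a ha)

/-- Uniqueness of the expected-utility functional up to positive affine transformations:
if `u` and `u'` each singly represent a complete relation `R` on a mixture-closed set
of AA acts, then the two expected-utility functionals are affinely related. -/
theorem singleUtilityRep_unique_up_to_affine
    {S O : Type*} [Fintype S] [Fintype O] [Nonempty S] [Nonempty O]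
    (C : Set (S → O → ℝ)) (R : (S → O → ℝ) → (S → O → ℝ) → Prop)
    (hAA : ∀ a ∈ C, IsAAAct a)
    (hmix : ∀ a ∈ C, ∀ b ∈ C, ∀ r : ℝ, 0 ≤ r → r ≤ 1 → r • a + (1 - r) • b ∈ C)
    (hcomp : ∀ a ∈ C, ∀ b ∈ C, R a b ∨ R b a)
    (u u' : S → O → ℝ)
    (hu : ∀ a ∈ C, ∀ b ∈ C,
      (R a b ↔ ∑ s, ∑ o, u s o * a s o ≥ ∑ s, ∑ o, u s o * b s o))
    (hu' : ∀ a ∈ C, ∀ b ∈ C,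
      (R a b ↔ ∑ s, ∑ o, u' s o * a s o ≥ ∑ s, ∑ o, u' s o * b s o)) :
    ∃ α β : ℝ, 0 ≤ α ∧ ∀ a ∈ C,
      ∑ s, ∑ o, u' s o * a s o = α * (∑ s, ∑ o, u s o * a s o) + β :=
  singleUtilityRep_unique_up_to_affine_general C R hmix u u' hu hu'
end

section
/- Let ⪰ be a binary relation on a closed, mixture-closed set C of Anscombe–Aumann acts satisfying extended mixture cancellation and having closed graph. Then every complete binary relation ⪰' on C that extends ⪰, satisfies extended mixture cancellation, and has closed graph is of one of the following two forms: either a ⪰' b holds for all a, b ∈ C (the trivial relation), or there exists a vector w ∈ ℝ^{S×O} with w·d ≥ 0 for every d ∈ {a − b : a ⪰ b} such that for all a, b ∈ C, a ⪰' b iff w·(a − b) ≥ 0. -/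
/-- Extended mixture cancellation for a relation on a subset of a real vector space. -/
def ExtMixCancel {V : Type*} [AddCommGroup V] [Module ℝ V]
    (C : Set V) (R : V → V → Prop) : Prop :=
  ∀ (n : ℕ) (a b : Fin (n + 1) → V),
    (∀ i, a i ∈ C) → (∀ i, b i ∈ C) →
    (∑ i, a i = ∑ i, b i) →
    (∃ k, k ≤ n ∧ (∀ i : Fin (n + 1), (i : ℕ) < k → R (a i) (b i)) ∧
      (∀ i : Fin (n + 1), k ≤ (i : ℕ) → a i = a (Fin.last n) ∧ b i = b (Fin.last n))) →
    R (b (Fin.last n)) (a (Fin.last n))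

/-- The graph `{(a, b) ∈ C × C : a ⪰ b}` is closed. -/
def ClosedGraphOn {V : Type*} [TopologicalSpace V] (C : Set V) (R : V → V → Prop) : Prop :=
  IsClosed {p : V × V | p.1 ∈ C ∧ p.2 ∈ C ∧ R p.1 p.2}

/-- `D⁺ = {a - b : a, b ∈ C and a ⪰ b}`. -/
def Dplus {V : Type*} [AddCommGroup V] (C : Set V) (R : V → V → Prop) : Set V :=
  {x | ∃ a ∈ C, ∃ b ∈ C, R a b ∧ x = a - b}

/-- The standard inner product on `ℝ^{S×O}`. -/
def dotSO {S O : Type*} [Fintype S] [Fintype O] (w x : S → O → ℝ) : ℝ :=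
  ∑ s, ∑ o, w s o * x s o

/-!
Let `D = {a - b : a ⪰' b}` and `W = C - C`. Extended mixture cancellation says that `m • (a - b)`
being a sum of elements of `D` forces `a ⪰' b`; with rational approximation and the closed graph
this makes `D` convex and `W ∩ t • D ⊆ D` for every `t > 0`, while completeness gives
`W ⊆ D ∪ -D`, so that `W \ D` is convex too. AA acts form a bounded set, hence `D` is closed.
In the span of `W`, where `0` is an interior point of `W`, Hahn–Banach separates the open convex
set `interior W \ D` from the cone over `D`: the separating functional is `≥ 0` on `D` and `< 0`
on `W \ D`, and it is `dotSO w` for some `w`. The trivial relation is the case `w = 0`.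
-/

open Pointwise

theorem Rat.exists_natCast_eq_mul {q : ℚ} (hq : 0 ≤ q) :
    ∃ m n : ℕ, m ≠ 0 ∧ (n : ℝ) = m * q := by
  refine ⟨q.den, q.num.toNat, q.den_ne_zero, ?_⟩
  rw [Rat.cast_def, mul_div_cancel₀ _ (by simp)]
  exact_mod_cast Int.toNat_of_nonneg (Rat.num_nonneg.2 hq)

theorem Convex.smul_add_one_sub_smul_mem {V : Type*} [AddCommGroup V] [Module ℝ V] {C : Set V}
    (hC : Convex ℝ C) {x y : V} (hx : x ∈ C) (hy : y ∈ C) {r : ℝ} (h0 : 0 ≤ r) (h1 : r ≤ 1) :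
    r • x + (1 - r) • y ∈ C :=
  hC hx hy h0 (sub_nonneg.2 h1) (add_sub_cancel r 1)

namespace ExtMixCancel

variable {V : Type*} [AddCommGroup V] [Module ℝ V] {C : Set V} {R : V → V → Prop} {x y : V}

theorem of_nsmul_sub_eq_sum (h : ExtMixCancel C R) (hx : x ∈ C) (hy : y ∈ C) {k m : ℕ}
    (d : Fin k → V) (hd : ∀ i, d i ∈ Dplus C R) (hxy : (m + 1) • (x - y) = ∑ i, d i) :
    R x y := by
  choose a ha b hb hab hd using hd
  set a' : Fin (k + (m + 1)) → V := Fin.append a fun _ => y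
  set b' : Fin (k + (m + 1)) → V := Fin.append b fun _ => x
  have head : ∀ i : Fin (k + (m + 1)), (i : ℕ) < k → R (a' i) (b' i) := by
    intro i hi
    induction i using Fin.addCases with
    | left j => simpa [a', b'] using hab j
    | right j => simp at hi
  have tail : ∀ i : Fin (k + (m + 1)), k ≤ (i : ℕ) → a' i = y ∧ b' i = x := by
    intro i hi
    induction i using Fin.addCases with
    | left j => simp at hi; omega
    | right j => simp [a', b']
  have last := tail (Fin.last (k + m)) (by simp)
  have hsum : ∑ i, a' i = ∑ i, b' i := by
    simp only [a', b', Fin.sum_univ_add, Fin.append_left, Fin.append_right, Finset.sum_const,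
      Finset.card_univ, Fintype.card_fin]
    simp only [hd, Finset.sum_sub_distrib] at hxy
    rw [smul_sub, sub_eq_sub_iff_add_eq_add] at hxy
    rw [← hxy, add_comm]
  have mem : ∀ i, a' i ∈ C ∧ b' i ∈ C := by
    intro i
    induction i using Fin.addCases with
    | left j => simpa [a', b'] using ⟨ha j, hb j⟩
    | right j => simpa [a', b'] using ⟨hy, hx⟩
  have key := h (k + m) a' b' (fun i => (mem i).1) (fun i => (mem i).2) hsum
    ⟨k, by omega, head, fun i hi =>
      ⟨(tail i hi).1.trans last.1.symm, (tail i hi).2.trans last.2.symm⟩⟩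
  rwa [last.1, last.2] at key

theorem of_nsmul_sub_mem_closure (h : ExtMixCancel C R) (hx : x ∈ C) (hy : y ∈ C) {m : ℕ}
    (hm : m ≠ 0) (hxy : m • (x - y) ∈ AddSubmonoid.closure (Dplus C R)) : R x y := by
  obtain ⟨l, hl, hsum⟩ := AddSubmonoid.exists_list_of_mem_closure hxy
  obtain ⟨m, rfl⟩ := Nat.exists_eq_succ_of_ne_zero hm
  refine h.of_nsmul_sub_eq_sum hx hy (m := m) l.get (fun i => hl _ (List.get_mem l i)) ?_
  rw [← List.sum_ofFn, List.ofFn_get, hsum]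

theorem of_sub_mem_Dplus (h : ExtMixCancel C R) (hx : x ∈ C) (hy : y ∈ C)
    (hxy : x - y ∈ Dplus C R) : R x y :=
  h.of_nsmul_sub_mem_closure hx hy one_ne_zero
    (by simpa using AddSubmonoid.subset_closure hxy)

theorem of_sub_eq_ratCast_smul (h : ExtMixCancel C R) (hx : x ∈ C) (hy : y ∈ C) {d : V}
    (hd : d ∈ Dplus C R) {q : ℚ} (hq : 0 ≤ q) (hxy : x - y = (q : ℝ) • d) : R x y := by
  obtain ⟨m, n, hm, hmn⟩ := Rat.exists_natCast_eq_mul hq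
  refine h.of_nsmul_sub_mem_closure hx hy hm ?_
  have : m • (x - y) = n • d := by
    rw [hxy, ← Nat.cast_smul_eq_nsmul ℝ, ← Nat.cast_smul_eq_nsmul ℝ, smul_smul, hmn]
  rw [this]
  exact nsmul_mem (AddSubmonoid.subset_closure hd) n

theorem mix_ratCast (h : ExtMixCancel C R) (hC : Convex ℝ C) {a₁ b₁ a₂ b₂ : V}
    (ha₁ : a₁ ∈ C) (hb₁ : b₁ ∈ C) (ha₂ : a₂ ∈ C) (hb₂ : b₂ ∈ C) (h₁ : R a₁ b₁) (h₂ : R a₂ b₂)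
    {q : ℚ} (hq0 : 0 ≤ q) (hq1 : q ≤ 1) :
    R ((q : ℝ) • a₁ + (1 - (q : ℝ)) • a₂) ((q : ℝ) • b₁ + (1 - (q : ℝ)) • b₂) := by
  have hq0' : (0 : ℝ) ≤ q := by exact_mod_cast hq0
  have hq1' : (q : ℝ) ≤ 1 := by exact_mod_cast hq1
  obtain ⟨m, n, hm, hmn⟩ := Rat.exists_natCast_eq_mul hq0
  have hnm : n ≤ m := by
    have : (n : ℝ) ≤ m := by rw [hmn]; exact mul_le_of_le_one_right (Nat.cast_nonneg m) hq1'
    exact_mod_cast this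
  refine h.of_nsmul_sub_mem_closure (hC.smul_add_one_sub_smul_mem ha₁ ha₂ hq0' hq1')
    (hC.smul_add_one_sub_smul_mem hb₁ hb₂ hq0' hq1') hm ?_
  have : m • ((q : ℝ) • a₁ + (1 - (q : ℝ)) • a₂ - ((q : ℝ) • b₁ + (1 - (q : ℝ)) • b₂)) =
      n • (a₁ - b₁) + (m - n) • (a₂ - b₂) := by
    rw [← Nat.cast_smul_eq_nsmul ℝ, ← Nat.cast_smul_eq_nsmul ℝ, ← Nat.cast_smul_eq_nsmul ℝ,
      Nat.cast_sub hnm, hmn]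
    module
  rw [this]
  have hd₁ : a₁ - b₁ ∈ Dplus C R := ⟨a₁, ha₁, b₁, hb₁, h₁, rfl⟩
  have hd₂ : a₂ - b₂ ∈ Dplus C R := ⟨a₂, ha₂, b₂, hb₂, h₂, rfl⟩
  exact add_mem (nsmul_mem (AddSubmonoid.subset_closure hd₁) n)
    (nsmul_mem (AddSubmonoid.subset_closure hd₂) _)

end ExtMixCancel

theorem IsClosed.Icc_subset_of_forall_ratCast_mem {T : Set ℝ} (hT : IsClosed T) {a b : ℝ}
    (hab : a < b) (h : ∀ q : ℚ, (q : ℝ) ∈ Set.Ioo a b → (q : ℝ) ∈ T) : Set.Icc a b ⊆ T :=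
  calc Set.Icc a b = closure (Set.Ioo a b) := (closure_Ioo hab.ne).symm
    _ ⊆ closure (closure (Set.Ioo a b ∩ Set.range Rat.cast)) :=
      closure_mono (Rat.denseRange_cast.open_subset_closure_inter isOpen_Ioo)
    _ = closure (Set.Ioo a b ∩ Set.range Rat.cast) := closure_closure
    _ ⊆ T := hT.closure_subset_iff.2 fun _ ⟨hq, q, hq'⟩ => hq' ▸ h q (hq' ▸ hq)

namespace ExtMixCancel

variable {V : Type*} [AddCommGroup V] [Module ℝ V] [TopologicalSpace V] [ContinuousAdd V]
  [ContinuousSMul ℝ V] {C : Set V} {R : V → V → Prop} {x y : V}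

theorem of_sub_eq_smul (h : ExtMixCancel C R) (hR : ClosedGraphOn C R) (hC : Convex ℝ C)
    (hx : x ∈ C) (hy : y ∈ C) {d : V} (hd : d ∈ Dplus C R) {t : ℝ} (ht : 0 < t)
    (hxy : x - y = t • d) : R x y := by
  let φ : ℝ → V × V := fun s => ((s / t) • x + (1 - s / t) • y, y)
  have hφ : Continuous φ := by fun_prop
  have := (hR.preimage hφ).Icc_subset_of_forall_ratCast_mem ht (fun q ⟨hq0, hqt⟩ => ?_)
    ⟨ht.le, le_rfl⟩
  · simpa [φ, ht.ne'] using this.2.2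
  have hr0 : 0 ≤ (q : ℝ) / t := by positivity
  have hr1 : (q : ℝ) / t ≤ 1 := (div_le_one ht).2 hqt.le
  refine ⟨hC.smul_add_one_sub_smul_mem hx hy hr0 hr1, hy, ?_⟩
  refine h.of_sub_eq_ratCast_smul (hC.smul_add_one_sub_smul_mem hx hy hr0 hr1) hy hd
    (by exact_mod_cast hq0.le) ?_
  calc (q / t) • x + (1 - q / t) • y - y = ((q : ℝ) / t) • (x - y) := by module
    _ = (q : ℝ) • d := by rw [hxy, smul_smul, div_mul_cancel₀ _ ht.ne']

theorem mix (h : ExtMixCancel C R) (hR : ClosedGraphOn C R) (hC : Convex ℝ C) {a₁ b₁ a₂ b₂ : V}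
    (ha₁ : a₁ ∈ C) (hb₁ : b₁ ∈ C) (ha₂ : a₂ ∈ C) (hb₂ : b₂ ∈ C) (h₁ : R a₁ b₁) (h₂ : R a₂ b₂)
    {r : ℝ} (hr0 : 0 ≤ r) (hr1 : r ≤ 1) : R (r • a₁ + (1 - r) • a₂) (r • b₁ + (1 - r) • b₂) := by
  let φ : ℝ → V × V := fun s => (s • a₁ + (1 - s) • a₂, s • b₁ + (1 - s) • b₂)
  have hφ : Continuous φ := by fun_prop
  refine ((hR.preimage hφ).Icc_subset_of_forall_ratCast_mem one_pos (fun q ⟨hq0, hq1⟩ => ?_)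
    ⟨hr0, hr1⟩).2.2
  exact ⟨hC.smul_add_one_sub_smul_mem ha₁ ha₂ hq0.le hq1.le,
    hC.smul_add_one_sub_smul_mem hb₁ hb₂ hq0.le hq1.le,
    h.mix_ratCast hC ha₁ hb₁ ha₂ hb₂ h₁ h₂ (by exact_mod_cast hq0.le) (by exact_mod_cast hq1.le)⟩

theorem convex_Dplus (h : ExtMixCancel C R) (hR : ClosedGraphOn C R) (hC : Convex ℝ C) :
    Convex ℝ (Dplus C R) := by
  rintro _ ⟨a₁, ha₁, b₁, hb₁, h₁, rfl⟩ _ ⟨a₂, ha₂, b₂, hb₂, h₂, rfl⟩ α β hα hβ hαβ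
  obtain rfl : β = 1 - α := by linarith
  have hα1 : α ≤ 1 := by linarith
  exact ⟨_, hC.smul_add_one_sub_smul_mem ha₁ ha₂ hα hα1, _,
    hC.smul_add_one_sub_smul_mem hb₁ hb₂ hα hα1, h.mix hR hC ha₁ hb₁ ha₂ hb₂ h₁ h₂ hα hα1,
    by module⟩

end ExtMixCancel

theorem Convex.zero_mem_interior_of_neg_mem {E : Type*} [AddCommGroup E] [Module ℝ E]
    [TopologicalSpace E] [IsTopologicalAddGroup E] [ContinuousConstSMul ℝ E] {W : Set E}
    (hW : Convex ℝ W) (hsymm : ∀ z ∈ W, -z ∈ W) (hint : (interior W).Nonempty) :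
    (0 : E) ∈ interior W := by
  obtain ⟨z, hz⟩ := hint
  simpa using hW.combo_interior_self_mem_interior hz (hsymm z (interior_subset hz))
    (a := 1 / 2) (b := 1 / 2) (by norm_num) (by norm_num) (by norm_num)

theorem Convex.zero_mem_interior_preimage_coe_span {E : Type*} [NormedAddCommGroup E]
    [NormedSpace ℝ E] [FiniteDimensional ℝ E] {W : Set E} (hW : Convex ℝ W)
    (hsymm : ∀ z ∈ W, -z ∈ W) (h0 : (0 : E) ∈ W) :
    (0 : Submodule.span ℝ W) ∈ interior (((↑) : Submodule.span ℝ W → E) ⁻¹' W) := by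
  set P := Submodule.span ℝ W
  have hW₀ : Convex ℝ (((↑) : P → E) ⁻¹' W) := hW.linear_preimage P.subtype
  have h0' : (0 : P) ∈ ((↑) : P → E) ⁻¹' W := h0
  refine hW₀.zero_mem_interior_of_neg_mem (fun z hz => hsymm _ hz) ?_
  rw [hW₀.interior_nonempty_iff_affineSpan_eq_top,
    AffineSubspace.affineSpan_eq_top_iff_vectorSpan_eq_top_of_nonempty ℝ P P ⟨0, h0'⟩,
    eq_top_iff, ← Submodule.span_span_coe_preimage]
  exact Submodule.span_le.2 fun z hz => by simpa using vsub_mem_vectorSpan ℝ hz h0'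

/-- `D` is the trace on `W` of a convex cone `K` with `W ⊆ K ∪ -K`. -/
structure IsCompleteConeSection {E : Type*} [AddCommGroup E] [Module ℝ E] (W D : Set E) : Prop where
  subset : D ⊆ W
  convex : Convex ℝ D
  smul_mem : ∀ ⦃c : ℝ⦄, 0 < c → ∀ ⦃d : E⦄, d ∈ D → c • d ∈ W → c • d ∈ D
  mem_or_neg_mem : ∀ z ∈ W, z ∈ D ∨ -z ∈ D

namespace IsCompleteConeSection

variable {E : Type*} [AddCommGroup E] [Module ℝ E] {W D : Set E}

theorem zero_mem (h : IsCompleteConeSection W D) (h0 : (0 : E) ∈ W) : (0 : E) ∈ D := by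
  simpa using h.mem_or_neg_mem 0 h0

theorem convex_diff (h : IsCompleteConeSection W D) (hW : Convex ℝ W) : Convex ℝ (W \ D) := by
  rintro z₁ ⟨hz₁W, hz₁D⟩ z₂ ⟨hz₂W, hz₂D⟩ α β hα hβ hαβ
  refine ⟨hW hz₁W hz₂W hα hβ hαβ, fun hz => hz₁D ?_⟩
  have hα0 : 0 < α := by
    refine hα.lt_of_ne fun hα0 => hz₂D ?_
    obtain rfl : β = 1 := by linarith
    simpa [← hα0] using hz
  have hz₂ : -z₂ ∈ D := (h.mem_or_neg_mem z₂ hz₂W).resolve_left hz₂D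
  -- `z₁` is a positive multiple of a point of the segment from `α z₁ + β z₂` to `-z₂`
  have hseg : (1 / (1 + β)) • (α • z₁ + β • z₂) + (β / (1 + β)) • -z₂ ∈ D :=
    h.convex hz hz₂ (by positivity) (by positivity) (by field_simp)
  have hz₁ : z₁ = ((1 + β) / α) • ((1 / (1 + β)) • (α • z₁ + β • z₂) + (β / (1 + β)) • -z₂) := by
    match_scalars
    · field_simp
    · field_simp
      ring
  rw [hz₁] at hz₁W ⊢
  exact h.smul_mem (by positivity) hseg hz₁W

theorem preimage (h : IsCompleteConeSection W D) {F : Type*} [AddCommGroup F] [Module ℝ F]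
    (f : F →ₗ[ℝ] E) : IsCompleteConeSection (f ⁻¹' W) (f ⁻¹' D) where
  subset := Set.preimage_mono h.subset
  convex := h.convex.linear_preimage f
  smul_mem _ hc _ hd hW := by
    simp only [Set.mem_preimage, map_smul] at hd hW ⊢
    exact h.smul_mem hc hd hW
  mem_or_neg_mem z hz := by simpa using h.mem_or_neg_mem (f z) hz

theorem exists_nonneg_neg_of_zero_mem_interior [TopologicalSpace E] [IsTopologicalAddGroup E]
    [ContinuousSMul ℝ E] (h : IsCompleteConeSection W D) (hW : Convex ℝ W) (hD : IsClosed D)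
    (h0 : (0 : E) ∈ interior W) :
    ∃ f : E →L[ℝ] ℝ, (∀ d ∈ D, 0 ≤ f d) ∧ ∀ z ∈ W, z ∉ D → f z < 0 := by
  set K := ConvexCone.hull ℝ D
  have hM : Convex ℝ (interior W \ D) := by
    rw [← Set.inter_eq_left.2 (interior_subset (s := W)), Set.inter_sdiff_assoc]
    exact hW.interior.inter (h.convex_diff hW)
  have hdisj : Disjoint (interior W \ D) K := by
    rw [Set.disjoint_left]
    rintro z ⟨hzW, hzD⟩ hzK
    obtain ⟨r, hr, d, hd, rfl⟩ := (ConvexCone.mem_hull_of_convex h.convex).1 hzK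
    exact hzD (h.smul_mem hr hd (interior_subset hzW))
  obtain ⟨f, u, hfM, hfK⟩ :=
    geometric_hahn_banach_open hM (isOpen_interior.sdiff hD) K.convex hdisj
  have hu : u ≤ 0 := by
    simpa using hfK 0 (ConvexCone.subset_hull (h.zero_mem (interior_subset h0)))
  -- `f` is bounded below on the cone `K`, hence nonnegative on it
  have hfK₀ : ∀ z ∈ K, 0 ≤ f z := by
    intro z hz
    by_contra! hneg
    have := hfK _ (K.smul_mem (div_pos_of_neg_of_neg (by linarith : u - 1 < 0) hneg) hz)
    rw [map_smul, smul_eq_mul, div_mul_cancel₀ _ hneg.ne] at this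
    linarith
  refine ⟨f, fun d hd => hfK₀ d (ConvexCone.subset_hull hd), fun z hzW hzD => ?_⟩
  have hhalf : (1 / 2 : ℝ) • z ∈ interior W \ D := by
    have hint := hW.combo_interior_self_mem_interior h0 hzW (a := 1 / 2) (b := 1 / 2)
      (by norm_num) (by norm_num) (by norm_num)
    refine ⟨by simpa using hint, fun hz => hzD ?_⟩
    simpa [smul_smul] using h.smul_mem two_pos hz (by simpa [smul_smul] using hzW)
  have := hfM _ hhalf
  rw [map_smul, smul_eq_mul] at this
  linarith

end IsCompleteConeSection

theorem IsCompleteConeSection.exists_dual {E : Type*} [NormedAddCommGroup E] [NormedSpace ℝ E]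
    [FiniteDimensional ℝ E] {W D : Set E} (h : IsCompleteConeSection W D) (hW : Convex ℝ W)
    (hsymm : ∀ z ∈ W, -z ∈ W) (hD : IsClosed D) :
    ∃ f : E →ₗ[ℝ] ℝ, (∀ d ∈ D, 0 ≤ f d) ∧ ∀ z ∈ W, z ∉ D → f z < 0 := by
  rcases W.eq_empty_or_nonempty with rfl | ⟨z, hz⟩
  · exact ⟨0, fun d hd => (h.subset hd).elim, fun z hz => hz.elim⟩
  have h0 : (0 : E) ∈ W := by
    simpa using hW hz (hsymm z hz) (a := 1 / 2) (b := 1 / 2) (by norm_num) (by norm_num)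
      (by norm_num)
  set P := Submodule.span ℝ W
  obtain ⟨f₀, hf₀D, hf₀N⟩ := (h.preimage P.subtype).exists_nonneg_neg_of_zero_mem_interior
    (hW.linear_preimage _) (hD.preimage continuous_subtype_val)
    (hW.zero_mem_interior_preimage_coe_span hsymm h0)
  obtain ⟨g, hg⟩ := LinearMap.exists_extend (f₀ : P →ₗ[ℝ] ℝ)
  have hgf : ∀ z (hz : z ∈ W), g z = f₀ ⟨z, Submodule.subset_span hz⟩ :=
    fun z hz => LinearMap.congr_fun hg ⟨z, _⟩
  refine ⟨g, fun d hd => ?_, fun z hz hzD => ?_⟩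
  · rw [hgf d (h.subset hd)]
    exact hf₀D _ hd
  · rw [hgf z hz]
    exact hf₀N _ hz hzD

theorem ExtMixCancel.isCompleteConeSection {V : Type*} [AddCommGroup V] [Module ℝ V]
    [TopologicalSpace V] [ContinuousAdd V] [ContinuousSMul ℝ V] {C : Set V} {R : V → V → Prop}
    (h : ExtMixCancel C R) (hR : ClosedGraphOn C R) (hC : Convex ℝ C)
    (hcomp : ∀ a ∈ C, ∀ b ∈ C, R a b ∨ R b a) : IsCompleteConeSection (C - C) (Dplus C R) where
  subset := by
    rintro _ ⟨a, ha, b, hb, -, rfl⟩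
    exact Set.sub_mem_sub ha hb
  convex := h.convex_Dplus hR hC
  smul_mem c hc d hd := by
    rintro ⟨a, ha, b, hb, hab⟩
    exact ⟨a, ha, b, hb, h.of_sub_eq_smul hR hC ha hb hd hc hab, hab.symm⟩
  mem_or_neg_mem := by
    rintro _ ⟨a, ha, b, hb, rfl⟩
    exact (hcomp a ha b hb).imp (fun hab => ⟨a, ha, b, hb, hab, rfl⟩)
      fun hba => ⟨b, hb, a, ha, hba, neg_sub a b⟩

theorem isClosed_Dplus {V : Type*} [NormedAddCommGroup V] [ProperSpace V] {C : Set V}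
    {R : V → V → Prop} (hC : Bornology.IsBounded C) (hR : ClosedGraphOn C R) :
    IsClosed (Dplus C R) := by
  have hG : IsCompact {p : V × V | p.1 ∈ C ∧ p.2 ∈ C ∧ R p.1 p.2} :=
    Metric.isCompact_of_isClosed_isBounded hR ((hC.prod hC).subset fun p hp => ⟨hp.1, hp.2.1⟩)
  have hD : Dplus C R = (fun p : V × V => p.1 - p.2) '' {p | p.1 ∈ C ∧ p.2 ∈ C ∧ R p.1 p.2} := by
    ext z
    constructor
    · rintro ⟨a, ha, b, hb, hab, rfl⟩
      exact ⟨(a, b), ⟨ha, hb, hab⟩, rfl⟩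
    · rintro ⟨⟨a, b⟩, ⟨ha, hb, hab⟩, rfl⟩
      exact ⟨a, ha, b, hb, hab, rfl⟩
  rw [hD]
  exact (hG.image (continuous_fst.sub continuous_snd)).isClosed

theorem isBounded_setOf_isAAAct {S O : Type*} [Fintype S] [Fintype O] :
    Bornology.IsBounded {a : S → O → ℝ | IsAAAct a} :=
  (Metric.isBounded_Icc 0 1).subset fun a ha =>
    ⟨fun s o => (ha s).1 o, fun s o =>
      calc a s o ≤ ∑ o', a s o' :=
            Finset.single_le_sum (fun o _ => (ha s).1 o) (Finset.mem_univ o)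
        _ = 1 := (ha s).2⟩

theorem exists_dotSO_eq {S O : Type*} [Fintype S] [Fintype O] (F : (S → O → ℝ) →ₗ[ℝ] ℝ) :
    ∃ w, ∀ x, dotSO w x = F x := by
  classical
  refine ⟨fun s o => F (Pi.single s (Pi.single o 1)), fun x => ?_⟩
  have hx : x = ∑ s, ∑ o, x s o • (Pi.single s (Pi.single o 1) : S → O → ℝ) := by
    ext s o
    simp [Finset.sum_apply, Pi.single_apply, ite_apply]
  conv_rhs => rw [hx]
  simp only [dotSO, map_sum, map_smul, smul_eq_mul, mul_comm]

theorem complete_extension_trivial_or_halfspace_general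
    {S O : Type*} [Fintype S] [Fintype O]
    (C : Set (S → O → ℝ)) (R R' : (S → O → ℝ) → (S → O → ℝ) → Prop)
    (hAA : ∀ a ∈ C, IsAAAct a)
    (hmix : ∀ a ∈ C, ∀ b ∈ C, ∀ r : ℝ, 0 ≤ r → r ≤ 1 → r • a + (1 - r) • b ∈ C)
    (hcomp' : ∀ a ∈ C, ∀ b ∈ C, R' a b ∨ R' b a)
    (hext : ∀ a ∈ C, ∀ b ∈ C, R a b → R' a b)
    (hcancel' : ExtMixCancel C R')
    (hgraph' : ClosedGraphOn C R') :
    (∀ a ∈ C, ∀ b ∈ C, R' a b) ∨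
    (∃ w : S → O → ℝ, (∀ d ∈ Dplus C R, 0 ≤ dotSO w d) ∧
      ∀ a ∈ C, ∀ b ∈ C, (R' a b ↔ 0 ≤ dotSO w (a - b))) := by
  have hC : Convex ℝ C := fun a ha b hb r s hr _ hrs => by
    obtain rfl : s = 1 - r := by linarith
    exact hmix a ha b hb r hr (by linarith)
  have hsymm : ∀ z ∈ C - C, -z ∈ C - C := by
    rintro _ ⟨a, ha, b, hb, rfl⟩
    exact ⟨b, hb, a, ha, (neg_sub a b).symm⟩
  obtain ⟨F, hFD, hFN⟩ := (hcancel'.isCompleteConeSection hgraph' hC hcomp').exists_dual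
    (hC.sub hC) hsymm (isClosed_Dplus (isBounded_setOf_isAAAct.subset hAA) hgraph')
  obtain ⟨w, hw⟩ := exists_dotSO_eq F
  refine Or.inr ⟨w, ?_, fun a ha b hb => ⟨fun hab => ?_, fun hab => ?_⟩⟩
  · rintro _ ⟨a, ha, b, hb, hab, rfl⟩
    exact hw _ ▸ hFD _ ⟨a, ha, b, hb, hext a ha b hb hab, rfl⟩
  · exact hw _ ▸ hFD _ ⟨a, ha, b, hb, hab, rfl⟩
  · by_contra hnab
    exact (hw _ ▸ hab).not_gt
      (hFN _ (Set.sub_mem_sub ha hb) fun hD => hnab (hcancel'.of_sub_mem_Dplus ha hb hD))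

/-- Every complete extension of `⪰` satisfying extended mixture cancellation with
closed graph is either trivial or a half-space relation. -/
theorem complete_extension_trivial_or_halfspace
    {S O : Type*} [Fintype S] [Fintype O] [Nonempty S] [Nonempty O]
    (C : Set (S → O → ℝ)) (R R' : (S → O → ℝ) → (S → O → ℝ) → Prop)
    (hAA : ∀ a ∈ C, IsAAAct a)
    (hclosedC : IsClosed C)
    (hmix : ∀ a ∈ C, ∀ b ∈ C, ∀ r : ℝ, 0 ≤ r → r ≤ 1 → r • a + (1 - r) • b ∈ C)
    (hcancel : ExtMixCancel C R)
    (hgraph : ClosedGraphOn C R)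
    (hcomp' : ∀ a ∈ C, ∀ b ∈ C, R' a b ∨ R' b a)
    (hext : ∀ a ∈ C, ∀ b ∈ C, R a b → R' a b)
    (hcancel' : ExtMixCancel C R')
    (hgraph' : ClosedGraphOn C R') :
    (∀ a ∈ C, ∀ b ∈ C, R' a b) ∨
    (∃ w : S → O → ℝ, (∀ d ∈ Dplus C R, 0 ≤ dotSO w d) ∧
      ∀ a ∈ C, ∀ b ∈ C, (R' a b ↔ 0 ≤ dotSO w (a - b))) :=
  complete_extension_trivial_or_halfspace_general C R R' hAA hmix hcomp' hext hcancel' hgraph'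
end
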